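/- Derived factivity of trust: if T^t_a A is derivable from Γ (agent a trusts t with respect to A), then A is derivable from Γ, where T^t_a A is defined via the rules: from Γ ⇒ K_a(j:A) infer Γ ⇒ T^t_a A, and from Δ ⇒ T^t_a B infer Δ ⇒ K_a(x:B) for fresh x. -/
import Mathlib


/-- Terms of the logic: variables, application, λ-abstraction, proof checker `!`. -/
inductive Tm : Type
  | var : ℕ → Tm
  | app : Tm → Tm → Tm
  | lam : ℕ → Tm → Tm
  | bang : Tm → Tm
deriving DecidableEq

/-- Formulae: ⊥, identity, predicates, →, ∧, ∀, epistemic operator K_a, justifications j:A. -/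
inductive Fm : Type
  | bot : Fm
  | eq : Tm → Tm → Fm
  | pred : ℕ → List Tm → Fm
  | imp : Fm → Fm → Fm
  | conj : Fm → Fm → Fm
  | all : ℕ → Fm → Fm
  | know : ℕ → Fm → Fm
  | just : Tm → Fm → Fm
  | trust : ℕ → Tm → Fm → Fm
deriving DecidableEq

/-- Negation abbreviation: ¬A := A → ⊥. -/
def Fm.neg (A : Fm) : Fm := Fm.imp A Fm.bot

/-- Free variables of a term. -/
def Tm.fv : Tm → Finset ℕ
  | .var x => {x}
  | .app t s => t.fv ∪ s.fv
  | .lam x t => t.fv.erase x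
  | .bang t => t.fv

/-- Free variables of a formula (the justification term and agent index do not count). -/
def Fm.fv : Fm → Finset ℕ
  | .bot => ∅
  | .eq t s => t.fv ∪ s.fv
  | .pred _ ts => ts.foldr (fun t acc => t.fv ∪ acc) ∅
  | .imp A B => A.fv ∪ B.fv
  | .conj A B => A.fv ∪ B.fv
  | .all x A => A.fv.erase x
  | .know _ A => A.fv
  | .just _ A => A.fv
  | .trust _ _ A => A.fv

/-- Term-level substitution: replace the (whole) term `v` by `u`. -/
def substTm (t u v : Tm) : Tm := if t = v then u else t

/-- Quantifier-instantiating substitution A[u/v]: permutes into K_a and j: operators. -/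
def Fm.qsubst : Fm → Tm → Tm → Fm
  | .bot, _, _ => .bot
  | .eq t1 t2, u, v => .eq (substTm t1 u v) (substTm t2 u v)
  | .pred n ts, u, v => .pred n (ts.map (fun t => substTm t u v))
  | .imp A B, u, v => .imp (A.qsubst u v) (B.qsubst u v)
  | .conj A B, u, v => .conj (A.qsubst u v) (B.qsubst u v)
  | .all y A, u, v =>
      if v = Tm.var y then .all y A
      else if u = Tm.var y then .all y A
      else .all y (A.qsubst u v)
  | .know a A, u, v => .know a (A.qsubst u v)
  | .just j A, u, v => .just j (A.qsubst u v)
  | .trust a t A, u, v => .trust a t (A.qsubst u v)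

/-- Leibniz substitution of identicals A(u/v): does NOT permute into K_a or j: operators. -/
def Fm.lsubst : Fm → Tm → Tm → Fm
  | .bot, _, _ => .bot
  | .eq t1 t2, u, v => .eq (substTm t1 u v) (substTm t2 u v)
  | .pred n ts, u, v => .pred n (ts.map (fun t => substTm t u v))
  | .imp A B, u, v => .imp (A.lsubst u v) (B.lsubst u v)
  | .conj A B, u, v => .conj (A.lsubst u v) (B.lsubst u v)
  | .all y A, u, v =>
      if v = Tm.var y then .all y A
      else if u = Tm.var y then .all y A
      else .all y (A.lsubst u v)
  | .know a A, _, _ => .know a A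
  | .just j A, _, _ => .just j A
  | .trust a t A, _, _ => .trust a t A

/-- Atomic formulae (targets of ex falso). -/
def Fm.isAtomic : Fm → Prop
  | .bot => True
  | .eq _ _ => True
  | .pred _ _ => True
  | _ => False


/-- A term occurs in a formula (as an argument of an atomic subformula). -/
def occursF (t : Tm) : Fm → Prop
  | .bot => False
  | .eq t1 t2 => t = t1 ∨ t = t2
  | .pred _ ts => t ∈ ts
  | .imp A B => occursF t A ∨ occursF t B
  | .conj A B => occursF t A ∨ occursF t B
  | .all _ A => occursF t A
  | .know _ A => occursF t A
  | .just _ A => occursF t A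
  | .trust _ _ A => occursF t A

/-- The natural deduction calculus (sequents Γ ⇒ A, contexts as lists up to structural rules). -/
inductive Der : List Fm → Fm → Prop
  | ax (A : Fm) : Der [A] A
  | impI {Γ A B} : Der (A :: Γ) B → Der Γ (Fm.imp A B)
  | impE {Γ Δ A B} : Der Γ (Fm.imp A B) → Der Δ A → Der (Γ ++ Δ) B
  | exf {Γ A} : Fm.isAtomic A → Der Γ Fm.bot → Der Γ A
  | dne {Γ A} : Der Γ (Fm.neg (Fm.neg A)) → Der Γ A
  | conjI {Γ Δ A B} : Der Γ A → Der Δ B → Der (Γ ++ Δ) (Fm.conj A B)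
  | conjE1 {Γ A B} : Der Γ (Fm.conj A B) → Der Γ A
  | conjE2 {Γ A B} : Der Γ (Fm.conj A B) → Der Γ B
  | allI {Γ x y A} :
      Der Γ (Fm.qsubst A (Tm.var y) (Tm.var x)) →
      (∀ B ∈ Γ, y ∉ Fm.fv B) → (y = x ∨ y ∉ Fm.fv (Fm.all x A)) →
      Der Γ (Fm.all x A)
  | allE {Γ x A} (t : Tm) : Der Γ (Fm.all x A) → Der Γ (Fm.qsubst A t (Tm.var x))
  | eqRefl (t : Tm) : Der [] (Fm.eq t t)
  | eqSym {Γ t s} : Der Γ (Fm.eq t s) → Der Γ (Fm.eq s t)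
  | eqTrans {Γ Δ u t v} : Der Γ (Fm.eq u t) → Der Δ (Fm.eq t v) → Der (Γ ++ Δ) (Fm.eq u v)
  | leibniz {Γ Δ t s A x} :
      Der Γ (Fm.eq t s) → Der Δ (Fm.lsubst A t (Tm.var x)) →
      Der (Γ ++ Δ) (Fm.lsubst A s (Tm.var x))
  | nec {Γ a A} :
      (∀ B ∈ Γ, (∃ C, B = Fm.know a C) ∨ (∃ t C, B = Fm.trust a t C)) →
      Der Γ A → Der Γ (Fm.know a A)
  | kdist {Γ Δ a A B} :
      Der Γ (Fm.know a (Fm.imp A B)) → Der Δ (Fm.know a A) → Der (Γ ++ Δ) (Fm.know a B)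
  | kfact {Γ a A} : Der Γ (Fm.know a A) → Der Γ A
  | k5 {Γ a A} : Der Γ (Fm.neg (Fm.know a A)) → Der Γ (Fm.know a (Fm.neg (Fm.know a A)))
  | jApp {Γ Δ j k A B} :
      Der Γ (Fm.just j (Fm.imp A B)) → Der Δ (Fm.just k A) →
      Der (Γ ++ Δ) (Fm.just (Tm.app j k) B)
  | jFact {Γ j A} : Der Γ (Fm.just j A) → Der Γ A
  | jBang {Γ j A} : Der Γ (Fm.just j A) → Der Γ (Fm.just (Tm.bang j) (Fm.just j A))
  | jLeib1 {Γ Δ j k t s A x} :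
      Der Γ (Fm.just k (Fm.eq t s)) → Der Δ (Fm.just j (Fm.lsubst A t (Tm.var x))) →
      Der (Γ ++ Δ) (Fm.just j (Fm.lsubst A s (Tm.var x)))
  | jLeib2 {Γ Δ j k t s A x} :
      Der Γ (Fm.just k (Fm.eq s t)) → Der Δ (Fm.just j (Fm.lsubst A t (Tm.var x))) →
      Der (Γ ++ Δ) (Fm.just j (Fm.lsubst A s (Tm.var x)))
  | trustI {Γ a A} (t j : Tm) :
      occursF t A → Der Γ (Fm.know a (Fm.just j A)) → Der Γ (Fm.trust a t A)
  | trustE {Δ a B} (t : Tm) (x : ℕ) :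
      Der Δ (Fm.trust a t B) → x ∉ Fm.fv B → (∀ C ∈ Δ, x ∉ Fm.fv C) →
      Der Δ (Fm.know a (Fm.just (Tm.var x) B))
  | struct {Γ Δ A} : Der Γ A → (∀ B ∈ Γ, B ∈ Δ) → Der Δ A

/-- Derivability from a (possibly infinite) set of hypotheses. -/
def Deriv (S : Set Fm) (A : Fm) : Prop :=
  ∃ Γ : List Fm, (∀ B ∈ Γ, B ∈ S) ∧ Der Γ A

def Consistent (S : Set Fm) : Prop := ¬ Deriv S Fm.bot

def MaxConsistent (S : Set Fm) : Prop :=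
  Consistent S ∧ ∀ A : Fm, A ∉ S → ¬ Consistent (insert A S)

def Counterexemplar (S : Set Fm) : Prop :=
  ∀ (x : ℕ) (A : Fm), Fm.neg (Fm.all x A) ∈ S →
    ∃ t : Tm, Fm.neg (A.qsubst t (Tm.var x)) ∈ S

/-- Maximally consistent counterexemplar set. -/
def IsMCC (S : Set Fm) : Prop := MaxConsistent S ∧ Counterexemplar S


/-- factivity of trust: Γ ⊢ T^t_a A implies Γ ⊢ A. -/
theorem trust_factive (Γ : List Fm) (a : ℕ) (t : Tm) (A : Fm)
    (h : Der Γ (Fm.trust a t A)) : Der Γ A := by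
  obtain ⟨x, hx⟩ := Infinite.exists_notMem_finset
    (A.fv ∪ Γ.foldr (fun B acc => B.fv ∪ acc) ∅)
  simp only [Finset.mem_union, not_or] at hx
  have hxA : x ∉ A.fv := hx.1
  have hxΓ : ∀ C ∈ Γ, x ∉ Fm.fv C := by
    intro C hC hmem
    apply hx.2
    clear hx h
    induction Γ with
    | nil => simp at hC
    | cons D Δ ih =>
      simp only [List.foldr, Finset.mem_union]
      rcases List.mem_cons.mp hC with h1 | h1
      · exact Or.inl (h1 ▸ hmem)
      · exact Or.inr (ih h1)
  exact Der.jFact (Der.kfact (Der.trustE t x h hxA hxΓ))
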